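/- For n ≥ 1, the symmetrization over the symmetric group Sₙ of the rational function ∏_{1 ≤ i < j ≤ n} (λᵢ − λⱼ + c)/(λᵢ − λⱼ) in variables λ₁, …, λₙ and a parameter c is a polynomial in λ₁, …, λₙ, c; in fact it is the constant n!. -/

import Mathlib

/-!
Expanding a permutation `σ` of `Fin (n + 1)` along `σ 0 = q` writes the symmetrization as
`∑_q (∏_{r ≠ q} (λ_q - λ_r + c) / (λ_q - λ_r)) · (symmetrization in the other λ's)`,
so by induction it suffices that `∑_q ∏_{r ≠ q} (λ_q - λ_r + c) / (λ_q - λ_r) = n + 1`.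
That is Lagrange interpolation read off in the top coefficient: the polynomial
`∏_r (X - λ_r + c) - ∏_r (X - λ_r)` has degree below the number of nodes, its coefficient of
`X ^ n` is `(n + 1) c`, and at the node `λ_q` it takes the value
`c ∏_{r ≠ q} (λ_q - λ_r + c)`.
-/

open Finset Polynomial

theorem Lagrange.sum_prod_erase_add_div_sub {ι F : Type*} [Field F] [DecidableEq ι]
    {s : Finset ι} {v : ι → F} (hv : Set.InjOn v s) (c : F) :
    ∑ i ∈ s, ∏ j ∈ s.erase i, (v i - v j + c) / (v i - v j) = #s := by
  rcases eq_or_ne c 0 with rfl | hc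
  · have hsub : ∀ i ∈ s, ∀ j ∈ s.erase i, v i - v j ≠ 0 := fun i hi j hj =>
      sub_ne_zero.mpr fun h => ne_of_mem_erase hj (hv (mem_of_mem_erase hj) hi h.symm)
    rw [sum_congr rfl fun i hi =>
      prod_eq_one fun j hj => by rw [add_zero, div_self (hsub i hi j hj)]]
    simp
  rcases s.eq_empty_or_nonempty with rfl | hs
  · simp
  set P := Lagrange.nodal s (fun i => v i - c) - Lagrange.nodal s v
  have hdeg : P.degree < #s := by
    rw [← Lagrange.degree_nodal (v := fun i => v i - c)]
    exact degree_sub_lt_left (by rw [Lagrange.degree_nodal, Lagrange.degree_nodal])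
      Lagrange.nodal_ne_zero
      (by rw [Lagrange.nodal_monic.leadingCoeff, Lagrange.nodal_monic.leadingCoeff])
  have heval : ∀ i ∈ s, P.eval (v i) = c * ∏ j ∈ s.erase i, (v i - v j + c) := by
    intro i hi
    rw [eval_sub, Lagrange.eval_nodal_at_node hi, sub_zero, Lagrange.eval_nodal,
      ← mul_prod_erase _ _ hi]
    simp only [sub_sub_cancel, sub_sub_eq_add_sub, add_sub_right_comm]
  have hcoeff : P.coeff (#s - 1) = #s * c := by
    rw [coeff_sub, Lagrange.nodal_eq, Lagrange.nodal_eq,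
      prod_X_sub_C_coeff_card_pred _ _ hs.card_pos, prod_X_sub_C_coeff_card_pred _ _ hs.card_pos,
      sum_sub_distrib, sum_const, nsmul_eq_mul]
    ring
  have key := Lagrange.coeff_eq_sum hv hdeg
  rw [hcoeff, sum_congr rfl fun i hi => by rw [heval i hi, mul_div_assoc, ← prod_div_distrib],
    ← mul_sum, mul_comm] at key
  exact (mul_left_cancel₀ hc key).symm

theorem Fin.prod_filter_lt_succ {M : Type*} [CommMonoid M] {n : ℕ}
    (f : Fin (n + 1) → Fin (n + 1) → M) :
    ∏ p ∈ univ.filter (fun p : Fin (n + 1) × Fin (n + 1) => p.1 < p.2), f p.1 p.2 =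
      (∏ j : Fin n, f 0 j.succ) *
        ∏ p ∈ univ.filter (fun p : Fin n × Fin n => p.1 < p.2), f p.1.succ p.2.succ := by
  simp only [prod_filter, Fintype.prod_prod_type, Fin.prod_univ_succ (n := n), Fin.succ_pos,
    Fin.not_lt_zero, Fin.succ_lt_succ_iff, if_true, if_false, one_mul]

theorem Fin.prod_swap_zero_succ {M : Type*} [CommMonoid M] {n : ℕ} (p : Fin (n + 1))
    (g : Fin (n + 1) → M) :
    ∏ j : Fin n, g (Equiv.swap 0 p j.succ) = ∏ q ∈ univ.erase p, g q := by
  have hinj : Function.Injective fun j : Fin n => Equiv.swap 0 p j.succ :=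
    (Equiv.injective _).comp (Fin.succ_injective n)
  rw [← prod_image hinj.injOn]
  congr
  ext q
  simp [Equiv.swap_apply_eq_iff, Fin.exists_succ_eq]

theorem Equiv.Perm.sum_prod_filter_lt_succ {R : Type*} [CommSemiring R] {n : ℕ}
    (f : Fin (n + 1) → Fin (n + 1) → R) :
    ∑ σ : Perm (Fin (n + 1)),
        ∏ p ∈ univ.filter (fun p : Fin (n + 1) × Fin (n + 1) => p.1 < p.2),
          f (σ p.1) (σ p.2) =
      ∑ q, (∏ r ∈ univ.erase q, f q r) *
        ∑ τ : Perm (Fin n), ∏ p ∈ univ.filter (fun p : Fin n × Fin n => p.1 < p.2),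
          f (swap 0 q (τ p.1).succ) (swap 0 q (τ p.2).succ) := by
  rw [← decomposeFin.symm.sum_comp, Fintype.sum_prod_type]
  refine sum_congr rfl fun q _ => ?_
  rw [mul_sum]
  refine sum_congr rfl fun τ _ => ?_
  rw [Fin.prod_filter_lt_succ fun i j =>
      f (decomposeFin.symm (q, τ) i) (decomposeFin.symm (q, τ) j),
    ← Fin.prod_swap_zero_succ q (f q), ← Equiv.prod_comp τ fun j => f q (swap 0 q j.succ)]
  simp only [decomposeFin_symm_apply_zero, decomposeFin_symm_apply_succ]

theorem symmetrization_is_factorial_general (F : Type*) [Field F]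
    (n : ℕ) (l : Fin n → F) (hl : Function.Injective l) (c : F) :
    (∑ σ : Equiv.Perm (Fin n),
        ∏ p ∈ Finset.univ.filter (fun p : Fin n × Fin n => p.1 < p.2),
          (l (σ p.1) - l (σ p.2) + c) / (l (σ p.1) - l (σ p.2)))
      = (n.factorial : F) := by
  induction n with
  | zero => simp
  | succ n ih =>
    have hl' : ∀ q, Function.Injective fun i : Fin n => l (Equiv.swap 0 q i.succ) := fun q =>
      hl.comp ((Equiv.injective _).comp (Fin.succ_injective n))
    rw [Equiv.Perm.sum_prod_filter_lt_succ fun i j => (l i - l j + c) / (l i - l j)]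
    simp only [fun q => ih _ (hl' q), ← sum_mul,
      Lagrange.sum_prod_erase_add_div_sub hl.injOn c, card_univ, Fintype.card_fin,
      Nat.factorial_succ, Nat.cast_mul]

/-- The symmetrization over `Sₙ` of `∏_{i<j} (λᵢ - λⱼ + c)/(λᵢ - λⱼ)` is the
constant `n!` (in particular, a polynomial). -/
theorem symmetrization_is_factorial (F : Type*) [Field F] [CharZero F]
    (n : ℕ) (hn : 1 ≤ n) (l : Fin n → F) (hl : Function.Injective l) (c : F) :
    (∑ σ : Equiv.Perm (Fin n),
        ∏ p ∈ Finset.univ.filter (fun p : Fin n × Fin n => p.1 < p.2),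
          (l (σ p.1) - l (σ p.2) + c) / (l (σ p.1) - l (σ p.2)))
      = (n.factorial : F) :=
  symmetrization_is_factorial_general F n l hl c
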